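/- arXiv:2212.14318 — 2 statements merged into one kernel-verified Lean document; each statement's English description precedes it below -/
import Mathlib

section
/- Let O = F_p·l where F_p is the normalized p×p DFT matrix and l an octonion unit. Then for any circulant quaternion matrix Q = Q_1 + Q_2·j (Q_1, Q_2 complex circulant), O·Q·O* = F_p·conj(Q_1)·F_p* - (F_p·Q_2·F_p*)·j, which is a diagonal quaternion matrix. -/
/-!
The rows of the Fourier matrix `F s t = ζ^(s t) c` are characters of `ℤ/p`, hence left eigenvectors
of every circulant matrix (reindex `j ↦ j + m`), and rows for distinct `s` are orthogonal (a
geometric sum over a nontrivial `p`-th root of unity). Hence `F C F*` is diagonal for circulant `C`.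

For the octonion part, the Cayley–Dickson rules give `(f l) q = (f q̄) l` and
`(x l) (g l)* = ḡ x` for quaternions `f, g, q, x`. So conjugating by `O = F l` conjugates the
quaternion entries of `Q = Q₁ + Q₂ j`, giving `Q̄₁ - Q₂ j`, and then lets the complex entries of `F`
and `F*` act from the left, which turns the result into `F Q̄₁ F* - (F Q₂ F*) j`.
-/

open Matrix Quaternion

/-- Embedding of the complex numbers into the quaternions (span of 1 and i). -/
noncomputable def cq (z : ℂ) : ℍ[ℝ] := ⟨z.re, z.im, 0, 0⟩

/-- The quaternion imaginary unit j. -/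
noncomputable def qj : ℍ[ℝ] := ⟨0, 0, 1, 0⟩

/-- The octonions, built from the quaternions by the Cayley–Dickson process:
`(a, b)` represents `a + b·l`. -/
def Oct : Type := ℍ[ℝ] × ℍ[ℝ]

noncomputable instance : AddCommGroup Oct :=
  inferInstanceAs (AddCommGroup (ℍ[ℝ] × ℍ[ℝ]))

/-- Cayley–Dickson multiplication, matching the standard octonion
multiplication table (e.g. `l·i = -il`, `(il)·(jl) = -k`). -/
noncomputable instance : Mul Oct :=
  ⟨fun x y => (x.1 * y.1 - star y.2 * x.2, y.2 * x.1 + x.2 * star y.1)⟩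

noncomputable instance : One Oct := ⟨((1 : ℍ[ℝ]), (0 : ℍ[ℝ]))⟩

/-- Octonion conjugation. -/
noncomputable instance : Star Oct := ⟨fun x => (star x.1, -x.2)⟩

/-- Embedding of the quaternions into the octonions. -/
noncomputable def qo (q : ℍ[ℝ]) : Oct := (q, 0)

/-- Embedding of the complex numbers into the octonions. -/
noncomputable def co (z : ℂ) : Oct := (cq z, 0)

/-- The octonion imaginary unit l. -/
noncomputable def ol : Oct := ((0 : ℍ[ℝ]), (1 : ℍ[ℝ]))

/-- The octonion imaginary unit j (the quaternion j viewed as an octonion). -/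
noncomputable def oj : Oct := (qj, 0)

open scoped ComplexConjugate

section Fourier

variable {p : ℕ}

theorem IsPrimitiveRoot.sum_pow_mul_star_pow_eq_zero {ζ : ℂ} (hζ : IsPrimitiveRoot ζ p)
    {s t : Fin p} (hst : s ≠ t) :
    ∑ m : Fin p, ζ ^ ((s : ℕ) * m) * star (ζ ^ ((t : ℕ) * m)) = 0 := by
  have hp : p ≠ 0 := (Fin.pos s).ne'
  have hstar : star ζ = ζ⁻¹ :=
    (Complex.inv_eq_conj (Complex.norm_eq_one_of_pow_eq_one hζ.pow_eq_one hp)).symm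
  set r := ζ ^ (s : ℕ) * (ζ ^ (t : ℕ))⁻¹
  have hterm (m : Fin p) : ζ ^ ((s : ℕ) * m) * star (ζ ^ ((t : ℕ) * m)) = r ^ (m : ℕ) := by
    rw [star_pow, hstar]
    ring
  have hr : r ≠ 1 := fun h => hst <| Fin.ext <| hζ.pow_inj s.isLt t.isLt <|
    (mul_inv_eq_one₀ (pow_ne_zero _ (hζ.ne_zero hp))).mp h
  have hrp : r ^ p = 1 := by
    rw [mul_pow, inv_pow, ← pow_mul, ← pow_mul, mul_comm (s : ℕ), mul_comm (t : ℕ), pow_mul,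
      pow_mul, hζ.pow_eq_one, one_pow, one_pow, inv_one, mul_one]
  rw [Fintype.sum_congr _ _ hterm, Fin.sum_univ_eq_sum_range (r ^ ·), geom_sum_eq hr, hrp,
    sub_self, zero_div]

variable {R : Type*} [CommRing R] {ζ c : R} {F : Matrix (Fin p) (Fin p) R}

theorem pow_mul_val_add (hζ : ζ ^ p = 1) (s i m : Fin p) :
    ζ ^ ((s : ℕ) * (i + m : Fin p)) = ζ ^ ((s : ℕ) * i) * ζ ^ ((s : ℕ) * m) := by
  have hs : (ζ ^ (s : ℕ)) ^ p = 1 := by rw [← pow_mul, mul_comm, pow_mul, hζ, one_pow]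
  rw [pow_mul, Fin.val_add, ← pow_eq_pow_mod _ hs, pow_add, ← pow_mul, ← pow_mul]

variable [NeZero p]

theorem fourier_mul_circulant_apply (hζ : ζ ^ p = 1)
    (hF : ∀ s t : Fin p, F s t = ζ ^ ((s : ℕ) * t) * c) (v : Fin p → R) (s m : Fin p) :
    (F * circulant v) s m = ζ ^ ((s : ℕ) * m) * (F *ᵥ v) s := by
  rw [mul_apply, mulVec, dotProduct, Finset.mul_sum]
  refine (Fintype.sum_equiv (Equiv.addRight m) _ _ fun i => ?_).symm
  rw [Equiv.coe_addRight, circulant_apply, add_sub_cancel_right, hF, hF, pow_mul_val_add hζ]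
  ring

theorem isDiag_fourier_mul_circulant_mul_conjTranspose {ζ c : ℂ} (hζ : IsPrimitiveRoot ζ p)
    {F : Matrix (Fin p) (Fin p) ℂ} (hF : ∀ s t : Fin p, F s t = ζ ^ ((s : ℕ) * t) * c)
    (v : Fin p → ℂ) : (F * circulant v * Fᴴ).IsDiag := by
  intro s t hst
  calc (F * circulant v * Fᴴ) s t
      = ∑ m : Fin p, ζ ^ ((s : ℕ) * m) * (F *ᵥ v) s * star (ζ ^ ((t : ℕ) * m) * c) := by
        rw [mul_apply]
        simp only [conjTranspose_apply, fourier_mul_circulant_apply hζ.pow_eq_one hF, hF]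
    _ = (F *ᵥ v) s * star c * ∑ m : Fin p, ζ ^ ((s : ℕ) * m) * star (ζ ^ ((t : ℕ) * m)) := by
        rw [Finset.mul_sum]
        refine Finset.sum_congr rfl fun m _ => ?_
        rw [star_mul']
        ring
    _ = 0 := by rw [hζ.sum_pow_mul_star_pow_eq_zero hst, mul_zero]

end Fourier

section ComplexQuaternion

noncomputable def cqAlgHom : ℂ →ₐ[ℝ] ℍ[ℝ] := Complex.liftAux (cq Complex.I) <| by
  ext <;>
    simp only [Quaternion.re_mul, Quaternion.imI_mul, Quaternion.imJ_mul, Quaternion.imK_mul] <;>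
    simp [cq]

theorem cqAlgHom_apply (z : ℂ) : cqAlgHom z = cq z := by
  rw [cqAlgHom, Complex.liftAux_apply, Quaternion.algebraMap_def]
  ext <;>
    simp only [re_add, imI_add, imJ_add, imK_add, re_coe, imI_coe, imJ_coe, imK_coe, re_smul,
      imI_smul, imJ_smul, imK_smul, smul_eq_mul] <;>
    simp [cq]

theorem cq_zero : cq 0 = 0 := by rw [← cqAlgHom_apply, map_zero]

theorem cq_mul (z w : ℂ) : cq (z * w) = cq z * cq w := by simp only [← cqAlgHom_apply, map_mul]

theorem cq_sum {ι : Type*} (s : Finset ι) (f : ι → ℂ) :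
    cq (∑ i ∈ s, f i) = ∑ i ∈ s, cq (f i) := by
  simp only [← cqAlgHom_apply, map_sum]

theorem star_cq (z : ℂ) : star (cq z) = cq (conj z) := by
  ext <;>
    simp only [Quaternion.re_star, Quaternion.imI_star, Quaternion.imJ_star, Quaternion.imK_star] <;>
    simp [cq]

theorem star_qj : star qj = -qj := Quaternion.star_eq_neg.mpr rfl

theorem qj_mul_cq (z : ℂ) : qj * cq z = cq (conj z) * qj := by
  ext <;>
    simp only [Quaternion.re_mul, Quaternion.imI_mul, Quaternion.imJ_mul, Quaternion.imK_mul] <;>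
    simp [cq, qj]

theorem star_cq_add_cq_mul_qj (a b : ℂ) :
    star (cq a + cq b * qj) = cq (conj a) - cq b * qj := by
  rw [star_add, star_mul, star_qj, star_cq, star_cq, neg_mul, qj_mul_cq, Complex.conj_conj,
    sub_eq_add_neg]

theorem cq_mul_cq_sub_cq_mul_qj (w a b : ℂ) :
    cq w * (cq a - cq b * qj) = cq (w * a) - cq (w * b) * qj := by
  rw [mul_sub, cq_mul, cq_mul, mul_assoc]

theorem sum_cq_sub_cq_mul_qj {ι : Type*} (s : Finset ι) (a b : ι → ℂ) :
    ∑ i ∈ s, (cq (a i) - cq (b i) * qj) = cq (∑ i ∈ s, a i) - cq (∑ i ∈ s, b i) * qj := by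
  rw [Finset.sum_sub_distrib, cq_sum, cq_sum, Finset.sum_mul]

theorem sum_star_cq_mul_sum_cq_mul_star {n : Type*} [Fintype n] (F A B : Matrix n n ℂ)
    (s t : n) :
    ∑ m, star (cq (F t m)) * ∑ k, cq (F s k) * star (cq (A k m) + cq (B k m) * qj) =
      cq ((F * A.map star * Fᴴ) s t) - cq ((F * B * Fᴴ) s t) * qj := by
  simp only [star_cq_add_cq_mul_qj, star_cq, cq_mul_cq_sub_cq_mul_qj, sum_cq_sub_cq_mul_qj,
    Finset.mul_sum]
  simp only [mul_apply, map_apply, conjTranspose_apply, Finset.sum_mul, Complex.star_def]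
  simp only [mul_comm, mul_left_comm]

end ComplexQuaternion

namespace Oct

theorem mul_def (x y : Oct) : x * y = (x.1 * y.1 - star y.2 * x.2, y.2 * x.1 + x.2 * star y.1) :=
  rfl

theorem star_def (x : Oct) : star x = (star x.1, -x.2) := rfl

end Oct

noncomputable def ql : ℍ[ℝ] →+ Oct := AddMonoidHom.inr ℍ[ℝ] ℍ[ℝ]

theorem ql_apply (q : ℍ[ℝ]) : ql q = ((0, q) : Oct) := rfl

theorem co_mul_ol (z : ℂ) : co z * ol = ql (cq z) := by
  rw [Oct.mul_def]
  exact Prod.ext (by simp [co, ol, ql_apply]) (by simp [co, ol, ql_apply])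

theorem qo_sum {ι : Type*} (s : Finset ι) (f : ι → ℍ[ℝ]) :
    qo (∑ i ∈ s, f i) = ∑ i ∈ s, qo (f i) :=
  map_sum (AddMonoidHom.inl ℍ[ℝ] ℍ[ℝ] : ℍ[ℝ] →+ Oct) f s

theorem qo_sub (x y : ℍ[ℝ]) : qo (x - y) = qo x - qo y :=
  map_sub (AddMonoidHom.inl ℍ[ℝ] ℍ[ℝ] : ℍ[ℝ] →+ Oct) x y

theorem ql_mul_qo (x y : ℍ[ℝ]) : ql x * qo y = ql (x * star y) := by
  rw [Oct.mul_def]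
  exact Prod.ext (by simp [qo, ql_apply]) (by simp [qo, ql_apply])

theorem ql_mul_star_ql (x y : ℍ[ℝ]) : ql x * star (ql y) = qo (star y * x) := by
  rw [Oct.mul_def, Oct.star_def]
  exact Prod.ext (by simp [qo, ql_apply]) (by simp [qo, ql_apply])

theorem mul_mul_conjTranspose_of_eq_co_mul_ol {n : Type*} [Fintype n] (F A B : Matrix n n ℂ)
    (O Q : Matrix n n Oct) (hO : ∀ s t, O s t = co (F s t) * ol)
    (hQ : ∀ s t, Q s t = qo (cq (A s t) + cq (B s t) * qj)) :
    O * Q * Oᴴ = (F * A.map star * Fᴴ).map (fun z => qo (cq z)) -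
      (F * B * Fᴴ).map (fun z => qo (cq z * qj)) := by
  have hOQ (s m : n) :
      (O * Q) s m = ql (∑ k, cq (F s k) * star (cq (A k m) + cq (B k m) * qj)) := by
    simp only [mul_apply, hO, hQ, co_mul_ol, ql_mul_qo, map_sum]
  ext s t
  rw [Matrix.sub_apply, map_apply, map_apply, ← qo_sub, ← sum_star_cq_mul_sum_cq_mul_star, qo_sum,
    mul_apply]
  simp only [hOQ, conjTranspose_apply, hO, co_mul_ol, ql_mul_star_ql]

/-- For `O = F_p·l` and any circulant quaternion matrix `Q = Q₁ + Q₂·j`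
(`Q₁, Q₂` complex circulant), `O·Q·O* = F_p·conj(Q₁)·F_p* - (F_p·Q₂·F_p*)·j`,
which is a diagonal quaternion matrix. -/
theorem stmt16 (p : ℕ) (hp : 0 < p)
    (Fp : Matrix (Fin p) (Fin p) ℂ)
    (hF : ∀ s t, Fp s t =
      Complex.exp (-(2 * Real.pi * Complex.I) / p) ^ ((s : ℕ) * (t : ℕ)) / Real.sqrt p)
    (O : Matrix (Fin p) (Fin p) Oct)
    (hO : ∀ s t, O s t = co (Fp s t) * ol)
    (Q1 Q2 : Matrix (Fin p) (Fin p) ℂ)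
    (hQ1 : ∃ v, Q1 = Matrix.circulant v)
    (hQ2 : ∃ v, Q2 = Matrix.circulant v)
    (Q : Matrix (Fin p) (Fin p) Oct)
    (hQ : ∀ s t, Q s t = qo (cq (Q1 s t) + cq (Q2 s t) * qj)) :
    O * Q * Oᴴ =
      ((Fp * Q1.map star * Fpᴴ).map fun z => qo (cq z)) -
        ((Fp * Q2 * Fpᴴ).map fun z => qo (cq z * qj)) ∧
    (O * Q * Oᴴ).IsDiag := by
  have : NeZero p := NeZero.of_pos hp
  have hζ : IsPrimitiveRoot (Complex.exp (-(2 * Real.pi * Complex.I) / p)) p := by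
    rw [neg_div, Complex.exp_neg]
    exact (Complex.isPrimitiveRoot_exp p hp.ne').inv
  have hdiag (v : Fin p → ℂ) : (Fp * circulant v * Fpᴴ).IsDiag :=
    isDiag_fourier_mul_circulant_mul_conjTranspose hζ (fun s t => by rw [hF, div_eq_mul_inv]) v
  have hconj := mul_mul_conjTranspose_of_eq_co_mul_ol Fp Q1 Q2 O Q hO hQ
  refine ⟨hconj, ?_⟩
  obtain ⟨v1, rfl⟩ := hQ1
  obtain ⟨v2, rfl⟩ := hQ2
  rw [hconj, map_circulant]
  exact ((hdiag _).map (by rw [cq_zero]; rfl)).sub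
    ((hdiag v2).map (by rw [cq_zero, zero_mul]; rfl))
end

section
/- Let F = F_1 + F_2·j be a unitary p×p quaternion matrix with F_1, F_2 complex. If F·A·F* is diagonal for every circulant quaternion matrix A of size p×p, then for every real circulant p×p matrix Â, all eight matrices F_1·Â·F_1*, F_1·Â·F_1^T, F_1·Â·F_2^T, F_1·Â·F_2*, F_2·Â·F_1*, F_2·Â·F_1^T, F_2·Â·F_2^T, F_2·Â·F_2* are diagonal. -/
/-!
For real `Â` and any quaternion `q`, the matrix `Â q` is circulant whenever `Â` is, so
`F (Â q) F*` is diagonal. Writing `q = a + b j`, the two complex components of `F (Â q) F*`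
are combinations of the eight matrices `Fᵢ Â Fⱼ*`, `Fᵢ Â Fⱼᵀ` with coefficients `a, b, ā, b̄`;
letting `a` (resp. `b`) run over `1` and `i` separates them.
-/

open Matrix Quaternion

open ComplexConjugate

@[simp] lemma cq_re (z : ℂ) : (cq z).re = z.re := rfl
@[simp] lemma cq_imI (z : ℂ) : (cq z).imI = z.im := rfl
@[simp] lemma cq_imJ (z : ℂ) : (cq z).imJ = 0 := rfl
@[simp] lemma cq_imK (z : ℂ) : (cq z).imK = 0 := rfl
@[simp] lemma qj_re : qj.re = 0 := rfl
@[simp] lemma qj_imI : qj.imI = 0 := rfl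
@[simp] lemma qj_imJ : qj.imJ = 1 := rfl
@[simp] lemma qj_imK : qj.imK = 0 := rfl

/-- `qfst q` and `qsnd q` are the complex coordinates in `q = cq (qfst q) + cq (qsnd q) * qj`. -/
noncomputable def qfst : ℍ[ℝ] →ₗ[ℝ] ℂ where
  toFun q := ⟨q.re, q.imI⟩
  map_add' _ _ := by apply Complex.ext <;> simp
  map_smul' _ _ := by apply Complex.ext <;> simp

noncomputable def qsnd : ℍ[ℝ] →ₗ[ℝ] ℂ where
  toFun q := ⟨q.imJ, q.imK⟩
  map_add' _ _ := by apply Complex.ext <;> simp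
  map_smul' _ _ := by apply Complex.ext <;> simp

@[simp] lemma qfst_re (q : ℍ[ℝ]) : (qfst q).re = q.re := rfl
@[simp] lemma qfst_im (q : ℍ[ℝ]) : (qfst q).im = q.imI := rfl
@[simp] lemma qsnd_re (q : ℍ[ℝ]) : (qsnd q).re = q.imJ := rfl
@[simp] lemma qsnd_im (q : ℍ[ℝ]) : (qsnd q).im = q.imK := rfl

lemma qfst_cq_add_cq_mul_qj (a b : ℂ) : qfst (cq a + cq b * qj) = a := by
  apply Complex.ext <;> simp [Quaternion.re_mul, Quaternion.imI_mul]

lemma qsnd_cq_add_cq_mul_qj (a b : ℂ) : qsnd (cq a + cq b * qj) = b := by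
  apply Complex.ext <;> simp [Quaternion.imJ_mul, Quaternion.imK_mul]

lemma qfst_mul (x y : ℍ[ℝ]) : qfst (x * y) = qfst x * qfst y - qsnd x * conj (qsnd y) := by
  apply Complex.ext <;> simp [Quaternion.re_mul, Quaternion.imI_mul] <;> ring

lemma qsnd_mul (x y : ℍ[ℝ]) : qsnd (x * y) = qfst x * qsnd y + qsnd x * conj (qfst y) := by
  apply Complex.ext <;> simp [Quaternion.imJ_mul, Quaternion.imK_mul] <;> ring

lemma qfst_star (x : ℍ[ℝ]) : qfst (star x) = conj (qfst x) := by
  apply Complex.ext <;> simp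

lemma qsnd_star (x : ℍ[ℝ]) : qsnd (star x) = -qsnd x := by
  apply Complex.ext <;> simp

namespace Matrix

variable {l m n : Type*}

lemma map_qfst_mul [Fintype m] (P : Matrix l m ℍ[ℝ]) (Q : Matrix m n ℍ[ℝ]) :
    (P * Q).map qfst = P.map qfst * Q.map qfst - P.map qsnd * (Q.map qsnd).map star := by
  ext i k
  simp only [map_apply, mul_apply, sub_apply, map_sum, qfst_mul, Finset.sum_sub_distrib]
  rfl

lemma map_qsnd_mul [Fintype m] (P : Matrix l m ℍ[ℝ]) (Q : Matrix m n ℍ[ℝ]) :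
    (P * Q).map qsnd = P.map qfst * Q.map qsnd + P.map qsnd * (Q.map qfst).map star := by
  ext i k
  simp only [map_apply, mul_apply, add_apply, map_sum, qsnd_mul, Finset.sum_add_distrib]
  rfl

lemma map_qfst_conjTranspose (P : Matrix m n ℍ[ℝ]) : Pᴴ.map qfst = (P.map qfst)ᴴ := by
  ext i k
  simp [qfst_star]

lemma map_qsnd_conjTranspose (P : Matrix m n ℍ[ℝ]) : Pᴴ.map qsnd = -(P.map qsnd)ᵀ := by
  ext i k
  simp [qsnd_star]

lemma map_real_smul_map_qfst (B : Matrix m n ℝ) (q : ℍ[ℝ]) :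
    (B.map (· • q)).map qfst = qfst q • B.map (fun r => (r : ℂ)) := by
  ext i k
  simp [mul_comm]

lemma map_real_smul_map_qsnd (B : Matrix m n ℝ) (q : ℍ[ℝ]) :
    (B.map (· • q)).map qsnd = qsnd q • B.map (fun r => (r : ℂ)) := by
  ext i k
  simp [mul_comm]

lemma map_star_smul_map_ofReal (B : Matrix m n ℝ) (c : ℂ) :
    (c • B.map (fun r => (r : ℂ))).map star = conj c • B.map (fun r => (r : ℂ)) := by
  ext i k
  simp

lemma isDiag_of_forall_smul_add_conj_smul {X Y : Matrix n n ℂ}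
    (h : ∀ a : ℂ, (a • X + conj a • Y).IsDiag) : X.IsDiag ∧ Y.IsDiag := by
  have hX := ((h 1).add ((h Complex.I).smul (-Complex.I))).smul (2⁻¹ : ℂ)
  have hY := ((h 1).sub ((h Complex.I).smul (-Complex.I))).smul (2⁻¹ : ℂ)
  refine ⟨(congrArg IsDiag ?_).mp hX, (congrArg IsDiag ?_).mp hY⟩ <;>
  · ext i j
    simp only [smul_apply, add_apply, sub_apply, smul_eq_mul, map_one, Complex.conj_I]
    ring_nf
    rw [Complex.I_sq]
    ring

lemma isDiag_of_forall_smul_sub_conj_smul {X Y : Matrix n n ℂ}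
    (h : ∀ a : ℂ, (a • X - conj a • Y).IsDiag) : X.IsDiag ∧ Y.IsDiag := by
  have := isDiag_of_forall_smul_add_conj_smul (Y := -Y) fun a => by
    simpa [sub_eq_add_neg] using h a
  simpa using this

variable [Fintype n] {F : Matrix m n ℍ[ℝ]} {F₁ F₂ : Matrix m n ℂ}

lemma map_qfst_mul_real_smul_mul_conjTranspose (h₁ : F.map qfst = F₁) (h₂ : F.map qsnd = F₂)
    (B : Matrix n n ℝ) (q : ℍ[ℝ]) :
    (F * B.map (· • q) * Fᴴ).map qfst =
      qfst q • (F₁ * B.map (fun r => (r : ℂ)) * F₁ᴴ) +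
      qsnd q • (F₁ * B.map (fun r => (r : ℂ)) * F₂ᴴ) -
      conj (qsnd q) • (F₂ * B.map (fun r => (r : ℂ)) * F₁ᴴ) +
      conj (qfst q) • (F₂ * B.map (fun r => (r : ℂ)) * F₂ᴴ) := by
  have hF₂ : (-F₂ᵀ).map star = -F₂ᴴ := by ext i k; simp
  rw [map_qfst_mul, map_qfst_mul, map_qsnd_mul, map_qfst_conjTranspose, map_qsnd_conjTranspose,
    map_real_smul_map_qfst, map_real_smul_map_qsnd, map_star_smul_map_ofReal,
    map_star_smul_map_ofReal, h₁, h₂, hF₂]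
  simp only [Matrix.add_mul, Matrix.sub_mul, Matrix.mul_neg,
    Matrix.smul_mul, Matrix.mul_smul, Matrix.mul_assoc]
  abel

lemma map_qsnd_mul_real_smul_mul_conjTranspose (h₁ : F.map qfst = F₁) (h₂ : F.map qsnd = F₂)
    (B : Matrix n n ℝ) (q : ℍ[ℝ]) :
    (F * B.map (· • q) * Fᴴ).map qsnd =
      qsnd q • (F₁ * B.map (fun r => (r : ℂ)) * F₁ᵀ) +
      conj (qsnd q) • (F₂ * B.map (fun r => (r : ℂ)) * F₂ᵀ) -
      qfst q • (F₁ * B.map (fun r => (r : ℂ)) * F₂ᵀ) +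
      conj (qfst q) • (F₂ * B.map (fun r => (r : ℂ)) * F₁ᵀ) := by
  have hF₁ : F₁ᴴ.map star = F₁ᵀ := by ext i k; simp
  rw [map_qsnd_mul, map_qfst_mul, map_qsnd_mul, map_qfst_conjTranspose, map_qsnd_conjTranspose,
    map_real_smul_map_qfst, map_real_smul_map_qsnd, map_star_smul_map_ofReal,
    map_star_smul_map_ofReal, h₁, h₂, hF₁]
  simp only [Matrix.add_mul, Matrix.sub_mul, Matrix.mul_neg,
    Matrix.smul_mul, Matrix.mul_smul, Matrix.mul_assoc]
  abel

end Matrix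

theorem stmt18_general (p : ℕ)
    (F1 F2 : Matrix (Fin p) (Fin p) ℂ)
    (F : Matrix (Fin p) (Fin p) ℍ[ℝ])
    (hF : ∀ s t, F s t = cq (F1 s t) + cq (F2 s t) * qj)
    (hdiag : ∀ A : Matrix (Fin p) (Fin p) ℍ[ℝ],
      (∃ v, A = Matrix.circulant v) → (F * A * Fᴴ).IsDiag) :
    ∀ Ahat : Matrix (Fin p) (Fin p) ℝ, (∃ v, Ahat = Matrix.circulant v) →
      ((F1 * Ahat.map (fun r => (r : ℂ)) * F1ᴴ).IsDiag ∧
       (F1 * Ahat.map (fun r => (r : ℂ)) * F1ᵀ).IsDiag ∧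
       (F1 * Ahat.map (fun r => (r : ℂ)) * F2ᵀ).IsDiag ∧
       (F1 * Ahat.map (fun r => (r : ℂ)) * F2ᴴ).IsDiag ∧
       (F2 * Ahat.map (fun r => (r : ℂ)) * F1ᴴ).IsDiag ∧
       (F2 * Ahat.map (fun r => (r : ℂ)) * F1ᵀ).IsDiag ∧
       (F2 * Ahat.map (fun r => (r : ℂ)) * F2ᵀ).IsDiag ∧
       (F2 * Ahat.map (fun r => (r : ℂ)) * F2ᴴ).IsDiag) := by
  rintro Ahat ⟨v, rfl⟩
  have h₁ : F.map qfst = F1 := by ext s t; simp [hF, qfst_cq_add_cq_mul_qj]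
  have h₂ : F.map qsnd = F2 := by ext s t; simp [hF, qsnd_cq_add_cq_mul_qj]
  have hq (q : ℍ[ℝ]) : (F * (circulant v).map (· • q) * Fᴴ).IsDiag :=
    hdiag _ ⟨_, map_circulant v _⟩
  have hfst (a b : ℂ) := (hq (cq a + cq b * qj)).map (map_zero qfst)
  have hsnd (a b : ℂ) := (hq (cq a + cq b * qj)).map (map_zero qsnd)
  simp only [map_qfst_mul_real_smul_mul_conjTranspose h₁ h₂,
    map_qsnd_mul_real_smul_mul_conjTranspose h₁ h₂, qfst_cq_add_cq_mul_qj,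
    qsnd_cq_add_cq_mul_qj] at hfst hsnd
  obtain ⟨hH11, hH22⟩ := isDiag_of_forall_smul_add_conj_smul fun a => by simpa using hfst a 0
  obtain ⟨hH12, hH21⟩ := isDiag_of_forall_smul_sub_conj_smul fun b => by simpa using hfst 0 b
  obtain ⟨hT11, hT22⟩ := isDiag_of_forall_smul_add_conj_smul fun b => by simpa using hsnd 0 b
  obtain ⟨hT21, hT12⟩ := isDiag_of_forall_smul_sub_conj_smul fun a => by
    simpa [neg_add_eq_sub] using hsnd (conj a) 0
  exact ⟨hH11, hT11, hT12, hH12, hH21, hT21, hT22, hH22⟩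

/-- Necessity: if the unitary quaternion matrix `F = F₁ + F₂·j` diagonalizes
every circulant quaternion matrix, then for every real circulant `Â` all eight
matrices `F₁·Â·F₁*`, `F₁·Â·F₁ᵀ`, `F₁·Â·F₂ᵀ`, `F₁·Â·F₂*`, `F₂·Â·F₁*`,
`F₂·Â·F₁ᵀ`, `F₂·Â·F₂ᵀ`, `F₂·Â·F₂*` are diagonal. -/
theorem stmt18 (p : ℕ) (hp : 0 < p)
    (F1 F2 : Matrix (Fin p) (Fin p) ℂ)
    (F : Matrix (Fin p) (Fin p) ℍ[ℝ])
    (hF : ∀ s t, F s t = cq (F1 s t) + cq (F2 s t) * qj)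
    (hunitary : F * Fᴴ = 1 ∧ Fᴴ * F = 1)
    (hdiag : ∀ A : Matrix (Fin p) (Fin p) ℍ[ℝ],
      (∃ v, A = Matrix.circulant v) → (F * A * Fᴴ).IsDiag) :
    ∀ Ahat : Matrix (Fin p) (Fin p) ℝ, (∃ v, Ahat = Matrix.circulant v) →
      ((F1 * Ahat.map (fun r => (r : ℂ)) * F1ᴴ).IsDiag ∧
       (F1 * Ahat.map (fun r => (r : ℂ)) * F1ᵀ).IsDiag ∧
       (F1 * Ahat.map (fun r => (r : ℂ)) * F2ᵀ).IsDiag ∧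
       (F1 * Ahat.map (fun r => (r : ℂ)) * F2ᴴ).IsDiag ∧
       (F2 * Ahat.map (fun r => (r : ℂ)) * F1ᴴ).IsDiag ∧
       (F2 * Ahat.map (fun r => (r : ℂ)) * F1ᵀ).IsDiag ∧
       (F2 * Ahat.map (fun r => (r : ℂ)) * F2ᵀ).IsDiag ∧
       (F2 * Ahat.map (fun r => (r : ℂ)) * F2ᴴ).IsDiag) :=
  stmt18_general p F1 F2 F hF hdiag
end
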